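/- For every ω ∈ ℝ \ {0}, the terms 𝓘(2^{−j−1} ω) equal 1 for all sufficiently large j, so the infinite product ∏_{j=1}^{∞} 𝓘(2^{−j−1} ω) is well defined, and one has 1 − 𝓘(ω/2 + π) · ∏_{j=1}^{∞} 𝓘(2^{−j−1} ω) = 2·𝟙_{(0,∞)}(ω), i.e. the left-hand side equals 2 if ω > 0 and equals 0 if ω < 0. -/

import Mathlib

/-!
Writing `𝓘 x = (-1) ^ ⌊(x + π) / 2π⌋`, the identity `𝓘(x + π) 𝓘(x / 2) = 𝓘(x / 2 + π)` becomes
a parity statement about `n + 1`, `⌊(n + 1) / 2⌋` and `⌊n / 2⌋ + 1` for `n = ⌊x / 2π⌋`.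
Hence `𝓘(ω/2 + π) ∏_{j < N} 𝓘(ω / 2^(j+2))` telescopes to `𝓘(ω / 2^(N+1) + π)`. Once `N` is so
large that `|ω / 2^n| < π` for `n ≥ N`, all later factors equal `1`, and `𝓘(ω / 2^(N+1) + π)`
is `-1` or `1` according to the sign of `ω`.
-/

open scoped Classical

noncomputable def Ifun (ω : ℝ) : ℝ :=
  if ∃ k : ℤ, -Real.pi + 4 * Real.pi * k ≤ ω ∧ ω < Real.pi + 4 * Real.pi * k then 1 else -1

open Real Filter

theorem exists_mem_Ico_iff_even_floor_div {p y : ℝ} (hp : 0 < p) :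
    (∃ k : ℤ, 2 * p * k ≤ y ∧ y < 2 * p * k + p) ↔ Even ⌊y / p⌋ := by
  simp only [Even, Int.floor_eq_iff, le_div_iff₀ hp, div_lt_iff₀ hp]
  refine exists_congr fun k => ?_
  push_cast
  constructor <;> rintro ⟨h₁, h₂⟩ <;> constructor <;> linarith

theorem Ifun_eq_ite_even_floor (x : ℝ) :
    Ifun x = if Even ⌊(x + π) / (2 * π)⌋ then 1 else -1 := by
  refine if_congr ?_ rfl rfl
  rw [← exists_mem_Ico_iff_even_floor_div two_pi_pos]
  refine exists_congr fun k => ?_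
  constructor <;> rintro ⟨h₁, h₂⟩ <;> constructor <;> linarith

theorem Ifun_add_pi_mul_Ifun_half (x : ℝ) : Ifun (x + π) * Ifun (x / 2) = Ifun (x / 2 + π) := by
  simp only [Ifun_eq_ite_even_floor]
  obtain ⟨t, rfl⟩ : ∃ t, x = 2 * π * t := ⟨x / (2 * π), by field_simp⟩
  have hπ : π ≠ 0 := pi_ne_zero
  have h₁ : (2 * π * t + π + π) / (2 * π) = t + 1 := by field_simp; ring
  have h₂ : (2 * π * t / 2 + π) / (2 * π) = (t + 1) / (2 : ℕ) := by push_cast; field_simp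
  have h₃ : (2 * π * t / 2 + π + π) / (2 * π) = (t + 1 + 1) / (2 : ℕ) := by push_cast; field_simp
  rw [h₁, h₂, h₃, Int.floor_div_natCast, Int.floor_div_natCast]
  simp only [Int.floor_add_one, Int.even_iff, Nat.cast_ofNat]
  split_ifs <;> first | omega | norm_num

theorem Ifun_of_mem_Ico {y : ℝ} (hy : y ∈ Set.Ico (-π) π) : Ifun y = 1 :=
  if_pos ⟨0, by simpa using hy⟩

theorem Ifun_of_mem_Ico_pi {y : ℝ} (hy : y ∈ Set.Ico π (3 * π)) : Ifun y = -1 := by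
  have hfloor : ⌊(y + π) / (2 * π)⌋ = 1 := by
    rw [Int.floor_eq_iff, le_div_iff₀ two_pi_pos, div_lt_iff₀ two_pi_pos]
    constructor <;> push_cast <;> linarith [hy.1, hy.2]
  rw [Ifun_eq_ite_even_floor, hfloor, if_neg Int.not_even_one]

theorem Ifun_mul_prod_Ifun_div_two_pow (ω : ℝ) (N : ℕ) :
    Ifun (ω / 2 + π) * ∏ j ∈ Finset.range N, Ifun (ω / 2 ^ (j + 2)) =
      Ifun (ω / 2 ^ (N + 1) + π) := by
  induction N with
  | zero => simp
  | succ N ih =>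
    rw [Finset.prod_range_succ, ← mul_assoc, ih, pow_succ 2 (N + 1), ← div_div,
      Ifun_add_pi_mul_Ifun_half]

theorem eventually_abs_div_two_pow_lt (ω : ℝ) {ε : ℝ} (hε : 0 < ε) :
    ∀ᶠ n : ℕ in atTop, |ω / 2 ^ n| < ε := by
  have hlim : Tendsto (fun n : ℕ => ω / 2 ^ n) atTop (nhds 0) := by
    simpa [div_eq_mul_inv] using
      (tendsto_pow_atTop_nhds_zero_of_lt_one (by norm_num : (0 : ℝ) ≤ 2⁻¹) (by norm_num)).const_mul ω
  exact hlim.abs.eventually (gt_mem_nhds (by simpa using hε))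

/-- the telescoping rectangular-function identity
`1 - 𝓘(ω/2 + π) ∏_{j≥1} 𝓘(2^{-j-1} ω) = 2·𝟙_{(0,∞)}(ω)` for `ω ≠ 0`.
(Here the product over `j ≥ 1` is indexed by `j : ℕ` via `j ↦ j + 1`.) -/
theorem rect_product_identity (ω : ℝ) (hω : ω ≠ 0) :
    (∃ J : ℕ, ∀ j : ℕ, J ≤ j → Ifun (ω / 2 ^ (j + 2)) = 1) ∧
    Multipliable (fun j : ℕ => Ifun (ω / 2 ^ (j + 2))) ∧
    1 - Ifun (ω / 2 + Real.pi) * ∏' j : ℕ, Ifun (ω / 2 ^ (j + 2)) =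
      2 * (if 0 < ω then 1 else 0) := by
  obtain ⟨N, hN⟩ := eventually_atTop.mp (eventually_abs_div_two_pow_lt ω pi_pos)
  have hsmall (n : ℕ) (hn : N ≤ n) : ω / 2 ^ n ∈ Set.Ioo (-π) π := abs_lt.mp (hN n hn)
  have hone (j : ℕ) (hj : j ∉ Finset.range N) : Ifun (ω / 2 ^ (j + 2)) = 1 := by
    simp only [Finset.mem_range, not_lt] at hj
    exact Ifun_of_mem_Ico (Set.Ioo_subset_Ico_self (hsmall _ (by omega)))
  refine ⟨⟨N, fun j hj => hone j (by simpa using hj)⟩, multipliable_of_ne_finset_one hone, ?_⟩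
  rw [tprod_eq_prod hone, Ifun_mul_prod_Ifun_div_two_pow]
  obtain ⟨hlo, hhi⟩ := hsmall (N + 1) (by omega)
  have hpow : (0 : ℝ) < 2 ^ (N + 1) := by positivity
  rcases hω.lt_or_gt with hneg | hpos
  · have : ω / 2 ^ (N + 1) < 0 := div_neg_of_neg_of_pos hneg hpow
    rw [Ifun_of_mem_Ico ⟨by linarith, by linarith⟩, if_neg hneg.not_gt]
    norm_num
  · have : 0 < ω / 2 ^ (N + 1) := div_pos hpos hpow
    rw [Ifun_of_mem_Ico_pi ⟨by linarith, by linarith⟩, if_pos hpos]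
    norm_num
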